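/- arXiv:1001.1663 — 2 statements merged into one kernel-verified Lean document; each statement's English description precedes it below -/
import Mathlib

section
/- Every finite proper extension L of a finite co-Heyting algebra L₀ contains a primitive tuple over L₀. Explicitly: if x is minimal in JoinIrr(L) \ L₀ and g = inf{a ∈ L₀ : x ≤ a}, then g is join irreducible in L₀, g⁻ ⊓ x ∈ L₀, and either x ≪ g (in which case (x, x) is primitive over L₀) or (x, g \ x) is primitive over L₀. -/
/-- `Ll b a` means `b ≪ a`: `a \ b = a` and `b ≤ a`. -/
def Ll {L : Type*} [CoheytingAlgebra L] (b a : L) : Prop := a \ b = a ∧ b ≤ a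

/-- `S` is (the underlying set of) a co-Heyting subalgebra. -/
def IsSubalg {L : Type*} [CoheytingAlgebra L] (S : Set L) : Prop :=
  ⊥ ∈ S ∧ ⊤ ∈ S ∧ ∀ a ∈ S, ∀ b ∈ S, a ⊔ b ∈ S ∧ a ⊓ b ∈ S ∧ a \ b ∈ S

/-- `g` is join irreducible in the subalgebra `S`. -/
def SupIrredIn {L : Type*} [CoheytingAlgebra L] (S : Set L) (g : L) : Prop :=
  g ∈ S ∧ g ≠ ⊥ ∧ ∀ x ∈ S, ∀ y ∈ S, g = x ⊔ y → g = x ∨ g = y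

/-- `(x₁, x₂)` is a primitive tuple over the subalgebra `S`, with witness `g`
(join irreducible in `S`) whose predecessor in `S` is `gm` (`g⁻`). -/
def Primitive {L : Type*} [CoheytingAlgebra L] (S : Set L) (g gm x₁ x₂ : L) : Prop :=
  x₁ ∉ S ∧ x₂ ∉ S ∧ SupIrredIn S g ∧ IsLUB {b | b ∈ S ∧ b < g} gm ∧
  gm ⊓ x₁ ∈ S ∧ gm ⊓ x₂ ∈ S ∧
  ((x₁ = x₂ ∧ Ll (gm ⊓ x₁) x₁ ∧ Ll x₁ g) ∨
   (x₁ ≠ x₂ ∧ x₁ ⊓ x₂ ∈ S ∧ g \ x₁ = x₂ ∧ g \ x₂ = x₁))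

/-- `T` is the co-Heyting subalgebra generated by `S ∪ {x₁, x₂}`. -/
def GeneratesOver {L : Type*} [CoheytingAlgebra L] (S T : Set L) (x₁ x₂ : L) : Prop :=
  IsSubalg T ∧ S ⊆ T ∧ x₁ ∈ T ∧ x₂ ∈ T ∧
  ∀ Tp : Set L, IsSubalg Tp → S ⊆ Tp → x₁ ∈ Tp → x₂ ∈ Tp → T ⊆ Tp

/-!
Since `L` is distributive, the join irreducible `x` is join prime. Hence `g` is join irreducible
in `L₀`: if `g = a ⊔ b` in `L₀` then `x ≤ a` or `x ≤ b`, and minimality of `g` forces equality;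
in particular `g⁻ < g`, so `x ≰ g⁻`. By minimality of `x`, every element strictly below `x` is a
join of join irreducibles lying in `L₀`, hence lies in `L₀`; this gives `g⁻ ⊓ x ∈ L₀`.
If `x ≤ g \ x` then `x ≪ g`, and `x \ g⁻ = x` by join primality. Otherwise join primality gives
`g \ (g \ x) = x`, so `g \ x ∉ L₀`; moreover `x ⊓ (g \ x) < x` lies in `L₀`, and so does
`g⁻ ⊓ (g \ x) = (g⁻ \ x) ⊔ (g⁻ ⊓ x ⊓ (g \ x))`.
-/

theorem IsLUB.induction_of_finite {α : Type*} [SemilatticeSup α] [OrderBot α] {s : Set α} {a : α}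
    (ha : IsLUB s a) (hs : s.Finite) {p : α → Prop} (hbot : p ⊥)
    (hsup : ∀ a₁, p a₁ → ∀ a₂, p a₂ → p (a₁ ⊔ a₂)) (hmem : ∀ b ∈ s, p b) : p a := by
  have hsup_id : IsLUB s (hs.toFinset.sup id) := by
    simpa using Finset.isLUB_sup_id (s := hs.toFinset)
  rw [ha.unique hsup_id]
  exact Finset.sup_induction hbot hsup fun b hb => hmem b (hs.mem_toFinset.mp hb)

theorem IsGLB.induction_of_finite {α : Type*} [SemilatticeInf α] [OrderTop α] {s : Set α} {a : α}
    (ha : IsGLB s a) (hs : s.Finite) {p : α → Prop} (htop : p ⊤)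
    (hinf : ∀ a₁, p a₁ → ∀ a₂, p a₂ → p (a₁ ⊓ a₂)) (hmem : ∀ b ∈ s, p b) : p a := by
  have hinf_id : IsGLB s (hs.toFinset.inf id) := by
    simpa using Finset.isGLB_inf_id (s := hs.toFinset)
  rw [ha.unique hinf_id]
  exact Finset.inf_induction htop hinf fun b hb => hmem b (hs.mem_toFinset.mp hb)

theorem Set.Finite.exists_isLUB {α : Type*} [SemilatticeSup α] [OrderBot α] {s : Set α}
    (hs : s.Finite) : ∃ a, IsLUB s a :=
  ⟨_, by simpa using Finset.isLUB_sup_id (s := hs.toFinset)⟩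

section CoheytingAlgebra

variable {L : Type*} [CoheytingAlgebra L] {a b c g x : L}

theorem SupPrime.sdiff_eq_self (hx : SupPrime x) (hxb : ¬ x ≤ b) : x \ b = x :=
  le_antisymm sdiff_le ((hx.2 le_sup_sdiff).resolve_left hxb)

theorem SupPrime.sdiff_sdiff_eq_self (hx : SupPrime x) (hxg : x ≤ g) (hxgx : ¬ x ≤ g \ x) :
    g \ (g \ x) = x :=
  le_antisymm (sdiff_le_iff.mpr (sup_comm x _ ▸ le_sup_sdiff))
    ((hx.2 (hxg.trans le_sup_sdiff)).resolve_left hxgx)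

theorem sdiff_eq_self_of_le_sdiff (h : x ≤ g \ x) : g \ x = g :=
  le_antisymm sdiff_le (le_sup_sdiff.trans (sup_le h le_rfl))

theorem inf_sdiff_eq_sdiff_sup_inf (h : b ≤ c) : b ⊓ c \ x = b \ x ⊔ b ⊓ (x ⊓ c \ x) := by
  apply le_antisymm
  · calc b ⊓ c \ x ≤ (x ⊔ b \ x) ⊓ (b ⊓ c \ x) := le_inf (inf_le_left.trans le_sup_sdiff) le_rfl
      _ = b ⊓ (x ⊓ c \ x) ⊔ b \ x ⊓ (b ⊓ c \ x) := by rw [inf_sup_right, inf_left_comm]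
      _ ≤ b \ x ⊔ b ⊓ (x ⊓ c \ x) := sup_comm (b \ x) _ ▸ sup_le_sup_left inf_le_left _
  · exact sup_le (le_inf sdiff_le (sdiff_le_sdiff_right h)) (inf_le_inf_left _ inf_le_right)

namespace IsSubalg

variable {S : Set L} (hS : IsSubalg S)
include hS

theorem sup_mem (ha : a ∈ S) (hb : b ∈ S) : a ⊔ b ∈ S := (hS.2.2 a ha b hb).1

theorem inf_mem (ha : a ∈ S) (hb : b ∈ S) : a ⊓ b ∈ S := (hS.2.2 a ha b hb).2.1

theorem sdiff_mem (ha : a ∈ S) (hb : b ∈ S) : a \ b ∈ S := (hS.2.2 a ha b hb).2.2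

variable [Finite L]

theorem isLUB_mem {s : Set L} (hsS : s ⊆ S) (ha : IsLUB s a) : a ∈ S :=
  ha.induction_of_finite s.toFinite hS.1 (fun _ h₁ _ h₂ => hS.sup_mem h₁ h₂) hsS

theorem isGLB_mem {s : Set L} (hsS : s ⊆ S) (ha : IsGLB s a) : a ∈ S :=
  ha.induction_of_finite s.toFinite hS.2.1 (fun _ h₁ _ h₂ => hS.inf_mem h₁ h₂) hsS

theorem mem_of_forall_supIrred_le (h : ∀ y, SupIrred y → y ≤ a → y ∈ S) : a ∈ S := by
  obtain ⟨t, rfl, hirr⟩ := exists_supIrred_decomposition a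
  exact Finset.sup_mem S hS.1 (fun _ h₁ _ h₂ => hS.sup_mem h₁ h₂) t id
    fun y hy => h y (hirr hy) (Finset.le_sup (f := id) hy)

theorem mem_of_lt_of_minimal (hxmin : ∀ y, SupIrred y → y ∉ S → y ≤ x → y = x) (hax : a < x) :
    a ∈ S :=
  hS.mem_of_forall_supIrred_le fun y hy hya => by
    by_contra hyS
    exact hax.not_ge (hxmin y hy hyS (hya.trans hax.le) ▸ hya)

theorem supIrredIn_of_isGLB (hx : SupPrime x) (hg : IsGLB {a | a ∈ S ∧ x ≤ a} g) :
    SupIrredIn S g := by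
  have hxg : x ≤ g := hg.2 fun _ ha => ha.2
  refine ⟨hS.isGLB_mem (fun _ ha => ha.1) hg, fun h => hx.ne_bot (le_bot_iff.mp (h ▸ hxg)),
    fun a ha b hb hab => ?_⟩
  rcases hx.2 (hab ▸ hxg) with hxa | hxb
  · exact Or.inl (le_antisymm (hg.1 ⟨ha, hxa⟩) (hab ▸ le_sup_left))
  · exact Or.inr (le_antisymm (hg.1 ⟨hb, hxb⟩) (hab ▸ le_sup_right))

theorem lt_of_isLUB_of_supIrredIn {gm : L} (hg : SupIrredIn S g)
    (hgm : IsLUB {b | b ∈ S ∧ b < g} gm) : gm < g :=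
  (hgm.induction_of_finite (p := fun b => b ∈ S ∧ b < g) (Set.toFinite _)
    ⟨hS.1, bot_lt_iff_ne_bot.mpr hg.2.1⟩
    (fun a ⟨ha, hag⟩ b ⟨hb, hbg⟩ => ⟨hS.sup_mem ha hb, (sup_le hag.le hbg.le).lt_of_ne
      fun h => (hg.2.2 a ha b hb h.symm).elim hag.ne' hbg.ne'⟩)
    fun _ hb => hb).2

end IsSubalg

end CoheytingAlgebra

theorem exists_primitive_tuple_general {L : Type*} [CoheytingAlgebra L] [Finite L]
    (S : Set L) (hS : IsSubalg S) (x g : L)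
    (hxirr : SupIrred x) (hxS : x ∉ S)
    (hxmin : ∀ y : L, SupIrred y → y ∉ S → y ≤ x → y = x)
    (hg : IsGLB {a | a ∈ S ∧ x ≤ a} g) :
    SupIrredIn S g ∧
    ∃ gm : L, IsLUB {b | b ∈ S ∧ b < g} gm ∧ gm ⊓ x ∈ S ∧
      ((Ll x g ∧ Primitive S g gm x x) ∨ Primitive S g gm x (g \ x)) := by
  have hx : SupPrime x := hxirr.supPrime
  have hxg : x ≤ g := hg.2 fun _ ha => ha.2
  have hirr : SupIrredIn S g := hS.supIrredIn_of_isGLB hx hg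
  obtain ⟨gm, hgm⟩ := (Set.toFinite {b | b ∈ S ∧ b < g}).exists_isLUB
  have hgmS : gm ∈ S := hS.isLUB_mem (fun _ hb => hb.1) hgm
  have hgmg : gm < g := hS.lt_of_isLUB_of_supIrredIn hirr hgm
  have hxgm : ¬ x ≤ gm := fun h => hgmg.not_ge (hg.1 ⟨hgmS, h⟩)
  have hgmx : gm ⊓ x ∈ S :=
    hS.mem_of_lt_of_minimal hxmin (inf_le_right.lt_of_not_ge fun h => hxgm (h.trans inf_le_left))
  refine ⟨hirr, gm, hgm, hgmx, ?_⟩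
  by_cases hxgx : x ≤ g \ x
  · have hll : Ll x g := ⟨sdiff_eq_self_of_le_sdiff hxgx, hxg⟩
    have hll' : Ll (gm ⊓ x) x :=
      ⟨(sdiff_inf_self_right gm x).trans (hx.sdiff_eq_self hxgm), inf_le_right⟩
    exact Or.inl ⟨hll, hxS, hxS, hirr, hgm, hgmx, hgmx, Or.inl ⟨rfl, hll', hll⟩⟩
  · have hgg : g \ (g \ x) = x := hx.sdiff_sdiff_eq_self hxg hxgx
    have hgxS : g \ x ∉ S := fun h => hxS (hgg ▸ hS.sdiff_mem hirr.1 h)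
    have hxgxS : x ⊓ g \ x ∈ S :=
      hS.mem_of_lt_of_minimal hxmin (inf_le_left.lt_of_not_ge fun h => hxgx (h.trans inf_le_right))
    have hgmgx : gm ⊓ g \ x ∈ S := by
      rw [inf_sdiff_eq_sdiff_sup_inf hgmg.le, ← sdiff_inf_self_left]
      exact hS.sup_mem (hS.sdiff_mem hgmS hgmx) (hS.inf_mem hgmS hxgxS)
    exact Or.inr ⟨hxS, hgxS, hirr, hgm, hgmx, hgmgx, Or.inr ⟨fun h => hxgx h.le, hxgxS, rfl, hgg⟩⟩

theorem exists_primitive_tuple {L : Type*} [CoheytingAlgebra L] [Finite L]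
    (S : Set L) (hS : IsSubalg S) (hne : S ≠ Set.univ) (x g : L)
    (hxirr : SupIrred x) (hxS : x ∉ S)
    (hxmin : ∀ y : L, SupIrred y → y ∉ S → y ≤ x → y = x)
    (hg : IsGLB {a | a ∈ S ∧ x ≤ a} g) :
    SupIrredIn S g ∧
    ∃ gm : L, IsLUB {b | b ∈ S ∧ b < g} gm ∧ gm ⊓ x ∈ S ∧
      ((Ll x g ∧ Primitive S g gm x x) ∨ Primitive S g gm x (g \ x)) :=
  exists_primitive_tuple_general S hS x g hxirr hxS hxmin hg
end

section
/- Let L be a finite co-Heyting algebra and a, c ∈ L with c ≪ a and a ≠ ⊥. Then there exists a finite co-Heyting algebra L' containing L as a subalgebra and a nonzero element b ∈ L' such that c ≪ b ≪ a. -/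
/-- An embedding of co-Heyting algebras: injective and preserving `⊥`, `⊤`, `⊔`, `⊓`, `\`. -/
def IsCoheytingEmb {K L : Type*} [CoheytingAlgebra K] [CoheytingAlgebra L] (f : K → L) : Prop :=
  Function.Injective f ∧ f ⊥ = ⊥ ∧ f ⊤ = ⊤ ∧
    (∀ a b, f (a ⊔ b) = f a ⊔ f b) ∧ (∀ a b, f (a ⊓ b) = f a ⊓ f b) ∧
    (∀ a b, f (a \ b) = f a \ f b)

/-- There is an embedding of `L` into `K` and a nonzero `b` in `K` with
`f c ≪ b ≪ f a`. -/
def DenseExt (L : Type*) [CoheytingAlgebra L] (K : Type*) [CoheytingAlgebra K]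
    (c a : L) : Prop :=
  ∃ (f : L → K) (b : K), IsCoheytingEmb f ∧ b ≠ ⊥ ∧ Ll (f c) b ∧ Ll b (f a)

/-!
By Birkhoff duality `L` is the lattice of lower sets of a finite poset `P`, and for lower sets
`C ≪ A` says that every point of `A` lies below a point of `A \ C`. Enlarge `P` by a new point
`s'` for each `s ∈ A \ C`, lying below exactly the points above `s` and above exactly the points
of `C` below `s`. Pulling lower sets back along the projection onto `P` is an embedding of
co-Heyting algebras, since the projection lifts inequalities upwards and so commutes with the
difference; in the enlarged poset the lower set `b = C ∪ {s'}` satisfies `C ≪ b ≪ A`.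
-/

open Function

section Embedding

variable {K L M : Type*} [CoheytingAlgebra K] [CoheytingAlgebra L] [CoheytingAlgebra M]

lemma IsCoheytingEmb.monotone {f : K → L} (hf : IsCoheytingEmb f) : Monotone f := by
  intro x y hxy
  rw [← inf_eq_left, ← hf.2.2.2.2.1, inf_eq_left.2 hxy]

lemma IsCoheytingEmb.comp {f : K → L} {g : L → M} (hg : IsCoheytingEmb g)
    (hf : IsCoheytingEmb f) : IsCoheytingEmb (g ∘ f) := by
  obtain ⟨gi, gb, gt, gs, gm, gd⟩ := hg
  obtain ⟨fi, fb, ft, fs, fm, fd⟩ := hf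
  exact ⟨gi.comp fi, by simp [fb, gb], by simp [ft, gt], by simp [fs, gs], by simp [fm, gm],
    by simp [fd, gd]⟩

lemma OrderIso.isCoheytingEmb (e : K ≃o L) : IsCoheytingEmb e :=
  ⟨e.injective, e.map_bot, e.map_top, e.map_sup, e.map_inf, map_sdiff e⟩

lemma Ll.map {f : K → L} (hf : IsCoheytingEmb f) {b a : K} (h : Ll b a) : Ll (f b) (f a) :=
  ⟨by rw [← hf.2.2.2.2.2, h.1], hf.monotone h.2⟩

lemma DenseExt.of_comp {f : K → L} (hf : IsCoheytingEmb f) {c a : K}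
    (h : DenseExt L M (f c) (f a)) : DenseExt K M c a := by
  obtain ⟨g, b, hg, hb, hcb, hba⟩ := h
  exact ⟨g ∘ f, b, hg.comp hf, hb, hcb, hba⟩

end Embedding

namespace LowerSet

variable {α β : Type*} [Preorder α] [Preorder β]

lemma sdiff_eq_lowerClosure (s t : LowerSet α) : s \ t = lowerClosure ((s : Set α) \ t) := by
  refine le_antisymm (sdiff_le_iff.2 fun x hx => ?_) fun x hx => ?_
  · by_cases hxt : x ∈ t
    · exact Or.inl hxt
    · exact Or.inr (subset_lowerClosure ⟨hx, hxt⟩)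
  · obtain ⟨y, ⟨hys, hyt⟩, hxy⟩ := mem_lowerClosure.1 hx
    refine (s \ t).lower hxy ?_
    exact (mem_sup_iff.1 ((le_sup_sdiff : s ≤ t ⊔ s \ t) hys)).resolve_left hyt

lemma mem_sdiff_iff {s t : LowerSet α} {x : α} : x ∈ s \ t ↔ ∃ y ∈ s, y ∉ t ∧ x ≤ y := by
  rw [sdiff_eq_lowerClosure, mem_lowerClosure]
  simp only [Set.mem_sdiff, SetLike.mem_coe, and_assoc]

lemma ll_iff {s t : LowerSet α} : Ll t s ↔ t ≤ s ∧ ∀ x ∈ s, ∃ y ∈ s, y ∉ t ∧ x ≤ y := by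
  refine and_comm.trans (and_congr_right fun _ => ?_)
  exact ⟨fun h x hx => mem_sdiff_iff.1 (by rwa [h]),
    fun h => le_antisymm sdiff_le fun x hx => mem_sdiff_iff.2 (h x hx)⟩

def comap {g : β → α} (hg : Monotone g) (s : LowerSet α) : LowerSet β :=
  ⟨g ⁻¹' s, fun _ _ hxy hy => s.lower (hg hxy) hy⟩

@[simp] lemma mem_comap {g : β → α} (hg : Monotone g) {s : LowerSet α} {x : β} :
    x ∈ comap hg s ↔ g x ∈ s := Iff.rfl

lemma isCoheytingEmb_comap {g : β → α} (hg : Monotone g) (hsurj : Surjective g)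
    (hfib : Relation.Fibration (· ≥ ·) (· ≥ ·) g) : IsCoheytingEmb (comap hg) := by
  refine ⟨fun s t hst => SetLike.ext fun x => ?_, rfl, rfl, fun _ _ => rfl, fun _ _ => rfl,
    fun s t => SetLike.ext fun x => ?_⟩
  · obtain ⟨y, rfl⟩ := hsurj x
    exact SetLike.ext_iff.1 hst y
  · simp only [mem_comap, mem_sdiff_iff]
    constructor
    · rintro ⟨y, hys, hyt, hxy⟩
      obtain ⟨z, hxz, rfl⟩ := hfib hxy
      exact ⟨z, hys, hyt, hxz⟩
    · rintro ⟨z, hzs, hzt, hxz⟩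
      exact ⟨g z, hzs, hzt, hg hxz⟩

end LowerSet

inductive Sprout {P : Type*} [Preorder P] (C A : LowerSet P) : Type _
  | old : P → Sprout C A
  | new : ↥((A : Set P) \ C) → Sprout C A

namespace Sprout

variable {P : Type*} [Preorder P] {C A : LowerSet P}

instance : Preorder (Sprout C A) where
  le
    | old p, old q => p ≤ q
    | old p, new s => p ≤ s ∧ p ∈ C
    | new s, old q => (s : P) ≤ q
    | new s, new t => s = t
  le_refl
    | old p => le_refl p
    | new s => (rfl : s = s)
  le_trans
    | old p, old q, old r, hpq, hqr => le_trans hpq hqr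
    | old p, old q, new t, hpq, hqt => ⟨le_trans hpq hqt.1, C.lower hpq hqt.2⟩
    | old p, new s, old r, hps, hsr => le_trans hps.1 hsr
    | old p, new s, new t, hps, (hst : s = t) => hst ▸ hps
    | new s, old q, old r, hsq, hqr => le_trans hsq hqr
    | new s, old q, new t, hsq, hqt => absurd (C.lower hsq hqt.2) s.2.2
    | new s, new t, old r, (hst : s = t), htr => hst ▸ htr
    | new s, new t, new u, hst, htu => hst.trans htu

instance [Finite P] : Finite (Sprout C A) :=
  Finite.of_injective (β := P ⊕ ↥((A : Set P) \ C))
    (fun | old p => .inl p | new s => .inr s)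
    (by rintro (p | s) (q | t) h <;> cases h <;> rfl)

def proj : Sprout C A → P
  | old p => p
  | new s => s

lemma proj_monotone : Monotone (proj : Sprout C A → P)
  | old _, old _, h => h
  | old _, new _, h => h.1
  | new _, old _, h => h
  | new _, new _, rfl => le_rfl

lemma proj_surjective : Surjective (proj : Sprout C A → P) := fun p => ⟨old p, rfl⟩

lemma proj_fibration : Relation.Fibration (· ≥ ·) (· ≥ ·) (proj : Sprout C A → P)
  | old _, _, h => ⟨old _, h, rfl⟩
  | new _, _, h => ⟨old _, h, rfl⟩

def InBud : Sprout C A → Prop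
  | old p => p ∈ C
  | new _ => True

def bud : LowerSet (Sprout C A) :=
  ⟨{z | InBud z}, by
    rintro (q | t) (p | s) hle hz
    exacts [C.lower hle hz, trivial, hle.2, trivial]⟩

lemma ll_comap_bud (h : Ll C A) :
    Ll (LowerSet.comap proj_monotone C) (bud : LowerSet (Sprout C A)) := by
  have hA := (LowerSet.ll_iff.1 h).2
  refine LowerSet.ll_iff.2 ⟨?_, ?_⟩
  · rintro (p | s) hz
    exacts [hz, trivial]
  · rintro (p | s) hz
    · obtain ⟨s, hsA, hsC, hps⟩ := hA p (h.2 hz)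
      exact ⟨new ⟨s, hsA, hsC⟩, trivial, hsC, hps, hz⟩
    · exact ⟨new s, trivial, s.2.2, le_rfl⟩

lemma ll_bud_comap (h : Ll C A) :
    Ll (bud : LowerSet (Sprout C A)) (LowerSet.comap proj_monotone A) := by
  have hA := (LowerSet.ll_iff.1 h).2
  refine LowerSet.ll_iff.2 ⟨?_, ?_⟩
  · rintro (p | s) hz
    exacts [h.2 hz, s.2.1]
  · rintro (p | s) hz
    · obtain ⟨s, hsA, hsC, hps⟩ := hA p hz
      exact ⟨old s, hsA, hsC, hps⟩
    · exact ⟨old s, s.2.1, s.2.2, (le_rfl : (s : P) ≤ s)⟩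

lemma bud_ne_bot (h : Ll C A) (hA : A ≠ ⊥) : (bud : LowerSet (Sprout C A)) ≠ ⊥ := by
  obtain ⟨p, hp⟩ := LowerSet.coe_nonempty.2 hA
  obtain ⟨s, hsA, hsC, -⟩ := (LowerSet.ll_iff.1 h).2 p hp
  intro hbot
  exact LowerSet.notMem_bot (hbot ▸ show new ⟨s, hsA, hsC⟩ ∈ bud from trivial)

theorem denseExt (h : Ll C A) (hA : A ≠ ⊥) :
    DenseExt (LowerSet P) (LowerSet (Sprout C A)) C A :=
  ⟨LowerSet.comap proj_monotone, bud,
    LowerSet.isCoheytingEmb_comap proj_monotone proj_surjective proj_fibration,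
    bud_ne_bot h hA, ll_comap_bud h, ll_bud_comap h⟩

end Sprout

theorem density_extension_exists (L : Type*) [CoheytingAlgebra L] [Finite L]
    (a c : L) (h : Ll c a) (ha : a ≠ ⊥) :
    ∃ (L' : Type) (inst : CoheytingAlgebra L'),
      Finite L' ∧ @DenseExt L _ L' inst c a := by
  classical
  cases nonempty_fintype L
  let e : L ≃o LowerSet (Shrink.{0} {x : L // SupIrred x}) :=
    OrderIso.lowerSetSupIrred.trans (LowerSet.map (orderIsoShrink _))
  have he := e.isCoheytingEmb
  refine ⟨LowerSet (Sprout (e c) (e a)), inferInstance, inferInstance, ?_⟩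
  exact (Sprout.denseExt (h.map he) (by simpa using ha)).of_comp he
end
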